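/- arXiv:1906.12214 — 2 statements merged into one kernel-verified Lean document; each statement's English description precedes it below -/
import Mathlib

section
/- Let A ∈ ℝ^{n×n} and S ⊆ ℝ^n be a linear subspace with range(A) ⊆ S and dim S = 1. Then A is D-semistable on S (i.e., AD is semistable on S for every D ∈ 𝒟₊) if and only if a_{ii} ≤ 0 for all i = 1,…,n. -/
open Matrix Polynomial Filter Topology

noncomputable section

/-- `D ∈ 𝒟₊`: a diagonal matrix with positive diagonal entries. -/
def IsPosDiag {n : ℕ} (D : Matrix (Fin n) (Fin n) ℝ) : Prop :=
  ∃ d : Fin n → ℝ, (∀ i, 0 < d i) ∧ D = Matrix.diagonal d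

/-- A real square matrix is stable if every root in `ℂ` of its characteristic
polynomial has negative real part. -/
def IsStableMat {n : ℕ} (A : Matrix (Fin n) (Fin n) ℝ) : Prop :=
  ∀ z : ℂ, (A.charpoly.map (algebraMap ℝ ℂ)).IsRoot z → z.re < 0

/-- A real square matrix is semistable if every root in `ℂ` of its characteristic
polynomial has non-positive real part. -/
def IsSemistableMat {n : ℕ} (A : Matrix (Fin n) (Fin n) ℝ) : Prop :=
  ∀ z : ℂ, (A.charpoly.map (algebraMap ℝ ℂ)).IsRoot z → z.re ≤ 0

/-- The restriction `A|_S : S → S` of a matrix whose range is contained in `S`. -/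
def restrictedMap {n : ℕ} (A : Matrix (Fin n) (Fin n) ℝ) (S : Submodule ℝ (Fin n → ℝ))
    (h : ∀ v, A.mulVec v ∈ S) : S →ₗ[ℝ] S :=
  A.mulVecLin.restrict (p := S) (q := S) (fun x _ => by simpa using h x)

/-- `A` is stable on `S`: `range A ⊆ S` and every eigenvalue over `ℂ` (root of the
characteristic polynomial) of `A|_S : S → S` has negative real part. -/
def IsStableOn {n : ℕ} (A : Matrix (Fin n) (Fin n) ℝ) (S : Submodule ℝ (Fin n → ℝ)) : Prop :=
  ∃ h : ∀ v, A.mulVec v ∈ S,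
    ∀ z : ℂ, (((restrictedMap A S h).charpoly).map (algebraMap ℝ ℂ)).IsRoot z → z.re < 0

/-- `A` is semistable on `S`: `range A ⊆ S` and every eigenvalue over `ℂ` of
`A|_S : S → S` has non-positive real part. -/
def IsSemistableOn {n : ℕ} (A : Matrix (Fin n) (Fin n) ℝ) (S : Submodule ℝ (Fin n → ℝ)) : Prop :=
  ∃ h : ∀ v, A.mulVec v ∈ S,
    ∀ z : ℂ, (((restrictedMap A S h).charpoly).map (algebraMap ℝ ℂ)).IsRoot z → z.re ≤ 0

/-- `M < 0` on `S`. -/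
def NegDefOn {n : ℕ} (M : Matrix (Fin n) (Fin n) ℝ) (S : Submodule ℝ (Fin n → ℝ)) : Prop :=
  ∀ x ∈ S, x ≠ 0 → x ⬝ᵥ M.mulVec x < 0

/-- `M ≤ 0` on `S`. -/
def NegSemidefOn {n : ℕ} (M : Matrix (Fin n) (Fin n) ℝ) (S : Submodule ℝ (Fin n → ℝ)) : Prop :=
  ∀ x ∈ S, x ⬝ᵥ M.mulVec x ≤ 0

/-- `M > 0` on `S`. -/
def PosDefOn {n : ℕ} (M : Matrix (Fin n) (Fin n) ℝ) (S : Submodule ℝ (Fin n → ℝ)) : Prop :=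
  ∀ x ∈ S, x ≠ 0 → 0 < x ⬝ᵥ M.mulVec x

/-- The Laplacian matrix `A_k` of the labeled digraph `(V,E)` with edge labels `k`:
`(A_k)_{i',i} = k_{i→i'}` if `(i→i') ∈ E`, `(A_k)_{i,i} = -∑_{(i→i')∈E} k_{i→i'}`,
and `0` otherwise (the graph has no self-loops). -/
def laplacian {m : ℕ} (E : Finset (Fin m × Fin m)) (k : Fin m × Fin m → ℝ) :
    Matrix (Fin m) (Fin m) ℝ :=
  fun i' i => (if (i, i') ∈ E then k (i, i') else 0)
    - (if i' = i then ∑ e ∈ E.filter (fun e => e.1 = i), k e else 0)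

/-- The incidence matrix `I_E ∈ ℝ^{V×E}`, with column `e_{i'} - e_i` for each edge `(i→i')`. -/
def incidence {m : ℕ} (E : Finset (Fin m × Fin m)) :
    Matrix (Fin m) {e : Fin m × Fin m // e ∈ E} ℝ :=
  fun i e => (if (e : Fin m × Fin m).2 = i then (1 : ℝ) else 0)
    - (if (e : Fin m × Fin m).1 = i then 1 else 0)

/-- `x^Ỹ ∈ ℝ^V`, defined by `(x^Ỹ)_j = ∏_i x_i ^ (Ỹ)_{ij}` (real exponents). -/
def powVec {n m : ℕ} (x : Fin n → ℝ) (Yt : Matrix (Fin n) (Fin m) ℝ) : Fin m → ℝ :=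
  fun j => ∏ i, (x i) ^ (Yt i j)

/-- The digraph `(V,E)` is weakly reversible: every connected component is strongly
connected, i.e. whenever `a` and `b` are connected by an undirected path, there is a
directed path from `a` to `b`. -/
def WeaklyReversible {m : ℕ} (E : Finset (Fin m × Fin m)) : Prop :=
  ∀ a b : Fin m,
    Relation.ReflTransGen (fun u v => (u, v) ∈ E ∨ (v, u) ∈ E) a b →
    Relation.ReflTransGen (fun u v => (u, v) ∈ E) a b

/-- The stoichiometric subspace `S = range (Y I_E)`. -/
def stoichSubspace {n m : ℕ} (Y : Matrix (Fin n) (Fin m) ℝ) (E : Finset (Fin m × Fin m)) :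
    Submodule ℝ (Fin n → ℝ) :=
  LinearMap.range (Y * incidence E).mulVecLin

/-- The Jacobian matrix `J(x) = Y A_k diag(x^Ỹ) Ỹᵀ diag(x⁻¹)` of `x ↦ Y A_k x^Ỹ`. -/
def jacobianMat {n m : ℕ} (E : Finset (Fin m × Fin m)) (k : Fin m × Fin m → ℝ)
    (Y Yt : Matrix (Fin n) (Fin m) ℝ) (x : Fin n → ℝ) : Matrix (Fin n) (Fin n) ℝ :=
  Y * laplacian E k * Matrix.diagonal (powVec x Yt) * Ytᵀ * Matrix.diagonal (fun i => (x i)⁻¹)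

/-- `C` is (the edge set of) a cycle: `{i_1→i_2, …, i_{r-1}→i_r, i_r→i_1}` with
pairwise distinct vertices `i_1, …, i_r` (and `r ≥ 2`). -/
def IsCycleEdges {m : ℕ} (C : Finset (Fin m × Fin m)) : Prop :=
  ∃ (r : ℕ) (f : Fin (r + 2) → Fin m), Function.Injective f ∧
    C = Finset.image (fun j => (f j, f (j + 1))) Finset.univ

/-- The edge set of the directed `m`-cycle `1 → 2 → ⋯ → m → 1`. -/
def cycleEdges (m : ℕ) [NeZero m] : Finset (Fin m × Fin m) :=
  Finset.image (fun i : Fin m => (i, i + 1)) Finset.univ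

end

/-! Since `range (A D) ⊆ S` and `dim S = 1`, the restriction of `A D` to `S` is multiplication by
its trace, and that is the trace of `A D` itself, `∑ⱼ aⱼⱼ dⱼ`. This is `≤ 0` for all positive `d`
iff every `aⱼⱼ ≤ 0`: to get `aᵢᵢ ≤ 0`, take `dᵢ = 1` and let the other `dⱼ` tend to `0`. -/

namespace LinearMap

variable {R M : Type*} [CommRing R] [Nontrivial R] [AddCommGroup M] [Module R M]
  [Module.Free R M] [Module.Finite R M]

theorem charpoly_eq_X_sub_C_trace_of_finrank_eq_one (hM : Module.finrank R M = 1)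
    (f : Module.End R M) : f.charpoly = X - C (trace R M f) := by
  have hdeg : f.charpoly.natDegree = 1 := by rw [charpoly_natDegree, hM]
  have htrace : trace R M f = -f.charpoly.coeff 0 := by
    rw [trace_eq_matrix_trace R (Module.Free.chooseBasis R M),
      Matrix.trace_eq_neg_charpoly_nextCoeff, ← charpoly_def,
      nextCoeff_of_natDegree_pos (by omega), hdeg]
  rw [f.charpoly_monic.eq_X_add_C hdeg, htrace, C_neg, sub_neg_eq_add]

end LinearMap

theorem isSemistableOn_iff_trace_nonpos {n : ℕ} {M : Matrix (Fin n) (Fin n) ℝ}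
    {S : Submodule ℝ (Fin n → ℝ)} (hM : ∀ v, M *ᵥ v ∈ S) (hS : Module.finrank ℝ S = 1) :
    IsSemistableOn M S ↔ M.trace ≤ 0 := by
  have hcharpoly : (restrictedMap M S hM).charpoly = X - C M.trace := by
    rw [LinearMap.charpoly_eq_X_sub_C_trace_of_finrank_eq_one hS, restrictedMap,
      LinearMap.trace_restrict_eq_of_forall_mem _ _ hM, ← Matrix.toLin'_apply',
      Matrix.trace_toLin'_eq]
  simp [IsSemistableOn, hcharpoly, hM, sub_eq_zero]

theorem forall_pos_sum_mul_nonpos_iff {ι : Type*} [Fintype ι] [DecidableEq ι] (a : ι → ℝ) :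
    (∀ d : ι → ℝ, (∀ j, 0 < d j) → ∑ j, a j * d j ≤ 0) ↔ ∀ i, a i ≤ 0 := by
  refine ⟨fun h i => ?_, fun ha d hd => Finset.sum_nonpos fun j _ =>
    mul_nonpos_of_nonpos_of_nonneg (ha j) (hd j).le⟩
  set s := ∑ j ∈ Finset.univ.erase i, a j
  have hε : ∀ ε : ℝ, 0 < ε → a i + ε * s ≤ 0 := by
    intro ε hε
    have := h (Function.update (fun _ => ε) i 1) fun j => by
      rcases eq_or_ne j i with rfl | hj <;> simp [*]
    rwa [← Finset.add_sum_erase _ _ (Finset.mem_univ i), Function.update_self, mul_one,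
      Finset.sum_congr rfl fun j hj => by rw [Function.update_of_ne (Finset.ne_of_mem_erase hj)],
      ← Finset.sum_mul, mul_comm] at this
  have hlim : Tendsto (fun ε : ℝ => a i + ε * s) (𝓝[>] 0) (𝓝 (a i)) := by
    have : Continuous fun ε : ℝ => a i + ε * s := by fun_prop
    simpa using (this.tendsto 0).mono_left nhdsWithin_le_nhds
  exact le_of_tendsto hlim (eventually_nhdsWithin_of_forall hε)

/-- for `dim S = 1`, `A` is D-semistable on `S` iff all diagonal entries of
`A` are non-positive. -/
theorem stmt18 {n : ℕ} (A : Matrix (Fin n) (Fin n) ℝ) (S : Submodule ℝ (Fin n → ℝ))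
    (hA : ∀ v, A.mulVec v ∈ S) (hdim : Module.finrank ℝ S = 1) :
    (∀ D, IsPosDiag D → IsSemistableOn (A * D) S) ↔ (∀ i, A i i ≤ 0) := by
  have hAD : ∀ D v, (A * D) *ᵥ v ∈ S := fun D v => by rw [← mulVec_mulVec]; exact hA _
  rw [← forall_pos_sum_mul_nonpos_iff]
  simp only [IsPosDiag, isSemistableOn_iff_trace_nonpos (hAD _) hdim]
  refine ⟨fun h d hd => ?_, fun h D ⟨d, hd, hD⟩ => ?_⟩
  · simpa [trace, mul_diagonal] using h _ ⟨d, hd, rfl⟩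
  · simpa [hD, trace, mul_diagonal] using h d hd
end

section
/- Let A ∈ ℝ^{n×n} and S ⊆ ℝ^n be a linear subspace with range(A) ⊆ S and dim S = 2. Then A is D-stable on S (i.e., AD is stable on S for every D ∈ 𝒟₊) if and only if: (a) a_{ii} ≤ 0 for all i and a_{ii} < 0 for some i, and (b) M_{ij} := a_{ii}a_{jj} − a_{ij}a_{ji} ≥ 0 for all i ≠ j and M_{ij} > 0 for some i ≠ j. -/
open Matrix Polynomial Filter Topology

-- auxiliary lemmas for stmt19
section StmtAux
open Matrix Polynomial Finset

private lemma charpoly_fin2' (M : Matrix (Fin 2) (Fin 2) ℝ) :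
    M.charpoly = X ^ 2 - C (Matrix.trace M) * X + C M.det := by
  rw [Matrix.charpoly, Matrix.det_fin_two, Matrix.trace_fin_two, Matrix.det_fin_two]
  simp [charmatrix_apply_eq, charmatrix_apply_ne]
  ring

private lemma quad_roots_neg' (t e : ℝ) :
    (∀ z : ℂ, ((X ^ 2 - C t * X + C e : ℝ[X]).map (algebraMap ℝ ℂ)).IsRoot z → z.re < 0)
      ↔ t < 0 ∧ 0 < e := by
  obtain ⟨s, hs⟩ := IsAlgClosed.exists_pow_nat_eq ((t : ℂ) ^ 2 - 4 * (e : ℂ)) (n := 2) (by norm_num)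
  set z₁ : ℂ := ((t : ℂ) + s) / 2 with hz₁
  set z₂ : ℂ := ((t : ℂ) - s) / 2 with hz₂
  have hsum : (t:ℂ) = z₁ + z₂ := by rw [hz₁, hz₂]; ring
  have hprod : (e : ℂ) = z₁ * z₂ := by
    rw [hz₁, hz₂]; field_simp; linear_combination hs
  have hmap : (X ^ 2 - C t * X + C e : ℝ[X]).map (algebraMap ℝ ℂ)
      = (X - C z₁) * (X - C z₂) := by
    push_cast [Polynomial.map_add, Polynomial.map_sub, Polynomial.map_mul, Polynomial.map_pow,
      Polynomial.map_X, Polynomial.map_C]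
    rw [show (algebraMap ℝ ℂ) t = (t:ℂ) from rfl, show (algebraMap ℝ ℂ) e = (e:ℂ) from rfl,
      hsum, hprod, C_add, C_mul]
    ring
  have hroot : ∀ z : ℂ, ((X ^ 2 - C t * X + C e : ℝ[X]).map (algebraMap ℝ ℂ)).IsRoot z
      ↔ (z = z₁ ∨ z = z₂) := by
    intro z
    rw [hmap, IsRoot, eval_mul, mul_eq_zero, eval_sub, eval_sub, eval_X, eval_C, eval_C,
      sub_eq_zero, sub_eq_zero]
  have hxy : s.re * s.im = 0 := by
    have := congrArg Complex.im hs
    simp [Complex.mul_im, pow_two] at this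
    linarith [this]
  have hre : s.re ^ 2 - s.im ^ 2 = t ^ 2 - 4 * e := by
    have := congrArg Complex.re hs
    simpa [Complex.mul_re, pow_two] using this
  have hz1re : z₁.re = (t + s.re) / 2 := by simp [hz₁, Complex.add_re, Complex.div_re]
  have hz2re : z₂.re = (t - s.re) / 2 := by simp [hz₂, Complex.sub_re, Complex.div_re]
  constructor
  · intro h
    have h1 := h z₁ ((hroot z₁).2 (Or.inl rfl))
    have h2 := h z₂ ((hroot z₂).2 (Or.inr rfl))
    rw [hz1re] at h1; rw [hz2re] at h2
    constructor
    · linarith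
    · nlinarith [sq_nonneg s.im]
  · rintro ⟨ht, he⟩ z hz
    rcases (hroot z).1 hz with rfl | rfl
    · rw [hz1re]
      rcases mul_eq_zero.1 hxy with h0 | h0
      · nlinarith
      · nlinarith
    · rw [hz2re]
      rcases mul_eq_zero.1 hxy with h0 | h0
      · nlinarith
      · nlinarith

private lemma E1' {n : ℕ} (a : Fin n → ℝ) :
    (∀ d : Fin n → ℝ, (∀ i, 0 < d i) → ∑ i, a i * d i < 0)
      ↔ (∀ i, a i ≤ 0) ∧ (∃ i, a i < 0) := by
  constructor
  · intro h
    constructor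
    · intro i
      by_contra hai
      push_neg at hai
      set sE : ℝ := ∑ j ∈ Finset.univ.erase i, a j with hsE
      set ε : ℝ := a i / (2 * (1 + |sE|)) with hε
      have hεpos : 0 < ε := by
        apply div_pos hai
        positivity
      have hd : ∀ j, (0:ℝ) < if j = i then 1 else ε := by
        intro j; split <;> [norm_num; exact hεpos]
      have hsum := h (fun j => if j = i then 1 else ε) hd
      have hdec : ∑ j, a j * (if j = i then 1 else ε) = a i + sE * ε := by
        rw [← Finset.add_sum_erase _ (fun j => a j * if j = i then 1 else ε)
          (Finset.mem_univ i), if_pos rfl, mul_one, hsE, Finset.sum_mul]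
        congr 1
        apply Finset.sum_congr rfl
        intro j hj
        rw [if_neg (Finset.ne_of_mem_erase hj)]
      rw [hdec] at hsum
      have h1 : (0:ℝ) < 1 + |sE| := by positivity
      have h2 : -|sE| ≤ sE := neg_abs_le sE
      have hεeq : ε * (2 * (1 + |sE|)) = a i := by
        rw [hε]; field_simp
      have h3 : -|sE| * ε ≤ sE * ε := mul_le_mul_of_nonneg_right h2 hεpos.le
      nlinarith [abs_nonneg sE, mul_nonneg hεpos.le (abs_nonneg sE)]
    · by_contra hex
      push_neg at hex
      have hsum := h (fun _ => 1) (fun _ => one_pos)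
      have : 0 ≤ ∑ i, a i * 1 := Finset.sum_nonneg (fun i _ => by
        simpa using hex i)
      linarith
  · rintro ⟨hle, i0, hi0⟩ d hd
    have : ∑ i, a i * d i < ∑ i : Fin n, (0:ℝ) := by
      apply Finset.sum_lt_sum
      · intro i _
        exact mul_nonpos_of_nonpos_of_nonneg (hle i) (hd i).le
      · exact ⟨i0, Finset.mem_univ i0, by nlinarith [hd i0]⟩
    simpa using this

private lemma E2' {n : ℕ} (g : Fin n → Fin n → ℝ) (hsymm : ∀ i j, g i j = g j i)
    (hdiag : ∀ i, g i i = 0) :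
    (∀ d : Fin n → ℝ, (∀ i, 0 < d i) → 0 < ∑ i, ∑ j, g i j * (d i * d j))
      ↔ (∀ i j, i ≠ j → 0 ≤ g i j) ∧ (∃ i j, i ≠ j ∧ 0 < g i j) := by
  constructor
  · intro h
    constructor
    · intro i0 j0 hne
      by_contra hneg
      push_neg at hneg
      set G : ℝ := ∑ i, ∑ j, |g i j| with hG
      have hGnn : 0 ≤ G :=
        Finset.sum_nonneg fun i _ => Finset.sum_nonneg fun j _ => abs_nonneg _
      set ε : ℝ := min 1 (-(g i0 j0) / (2 * (1 + G))) with hε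
      have hεpos : 0 < ε := lt_min one_pos (div_pos (by linarith) (by positivity))
      have hεle1 : ε ≤ 1 := min_le_left _ _
      have hεle : ε ≤ -(g i0 j0) / (2 * (1 + G)) := min_le_right _ _
      set d : Fin n → ℝ := fun k => if k = i0 ∨ k = j0 then 1 else ε with hd
      have hdpos : ∀ k, 0 < d k := by
        intro k; rw [hd]; dsimp only; split <;> [norm_num; exact hεpos]
      have hdle1 : ∀ k, d k ≤ 1 := by
        intro k; rw [hd]; dsimp only; split
        · exact le_refl 1
        · exact hεle1
      have hsum := h d hdpos
      rw [← Finset.sum_product' (s := Finset.univ) (t := Finset.univ)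
        (f := fun i j => g i j * (d i * d j))] at hsum
      set T : Finset (Fin n × Fin n) := {i0, j0} ×ˢ ({i0, j0} : Finset (Fin n)) with hT
      have hTsub : T ⊆ Finset.univ ×ˢ Finset.univ := fun x _ => by
        simp [Finset.mem_product]
      have hsplit := Finset.sum_sdiff
        (f := fun x : Fin n × Fin n => g x.1 x.2 * (d x.1 * d x.2)) hTsub
      have hTsum : ∑ x ∈ T, g x.1 x.2 * (d x.1 * d x.2) = 2 * g i0 j0 := by
        rw [hT, Finset.sum_product (f := fun x : Fin n × Fin n => g x.1 x.2 * (d x.1 * d x.2))]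
        rw [Finset.sum_pair hne]
        rw [Finset.sum_pair hne, Finset.sum_pair hne]
        have hdi : d i0 = 1 := by rw [hd]; simp
        have hdj : d j0 = 1 := by rw [hd]; simp
        rw [hdi, hdj, hdiag i0, hdiag j0, hsymm j0 i0]
        ring
      have hrest : ∑ x ∈ (Finset.univ ×ˢ Finset.univ) \ T,
          g x.1 x.2 * (d x.1 * d x.2) ≤ ε * G := by
        calc ∑ x ∈ (Finset.univ ×ˢ Finset.univ) \ T, g x.1 x.2 * (d x.1 * d x.2)
            ≤ ∑ x ∈ (Finset.univ ×ˢ Finset.univ) \ T, ε * |g x.1 x.2| := by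
              apply Finset.sum_le_sum
              intro x hx
              have hx' : x.1 ∉ ({i0, j0} : Finset (Fin n))
                  ∨ x.2 ∉ ({i0, j0} : Finset (Fin n)) := by
                rcases Finset.mem_sdiff.1 hx with ⟨-, hnT⟩
                by_contra hc
                push_neg at hc
                exact hnT (Finset.mem_product.2 ⟨hc.1, hc.2⟩)
              have hdd : d x.1 * d x.2 ≤ ε := by
                rcases hx' with hx1 | hx1
                · have : d x.1 = ε := by
                    rw [hd]; dsimp only
                    rw [if_neg]
                    simpa [not_or] using (by simpa using hx1)
                  rw [this]
                  nlinarith [hdpos x.2, hdle1 x.2, hεpos]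
                · have : d x.2 = ε := by
                    rw [hd]; dsimp only
                    rw [if_neg]
                    simpa [not_or] using (by simpa using hx1)
                  rw [this]
                  nlinarith [hdpos x.1, hdle1 x.1, hεpos]
              have hddpos : 0 < d x.1 * d x.2 := mul_pos (hdpos x.1) (hdpos x.2)
              nlinarith [abs_nonneg (g x.1 x.2), le_abs_self (g x.1 x.2)]
          _ ≤ ∑ x ∈ Finset.univ ×ˢ Finset.univ, ε * |g x.1 x.2| := by
              apply Finset.sum_le_sum_of_subset_of_nonneg (Finset.sdiff_subset)
              intro x _ _
              positivity
          _ = ε * G := by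
              rw [hG, ← Finset.mul_sum]
              congr 1
              exact Finset.sum_product _ _ _
      have hfinal : ∑ x ∈ Finset.univ ×ˢ Finset.univ, g x.1 x.2 * (d x.1 * d x.2)
          ≤ 2 * g i0 j0 + ε * G := by
        rw [← hsplit, hTsum]
        linarith [hrest]
      have hεG : ε * G ≤ -(g i0 j0) := by
        have h2 : 0 < 2 * (1 + G) := by positivity
        have := mul_le_mul_of_nonneg_right hεle hGnn
        calc ε * G ≤ -(g i0 j0) / (2 * (1 + G)) * G := this
          _ ≤ -(g i0 j0) := by
            rw [div_mul_eq_mul_div, div_le_iff₀ h2]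
            nlinarith
      nlinarith
    · by_contra hex
      push_neg at hex
      have hsum := h (fun _ => 1) (fun _ => one_pos)
      have : ∑ i, ∑ j, g i j * ((1:ℝ) * 1) ≤ 0 := by
        apply Finset.sum_nonpos
        intro i _
        apply Finset.sum_nonpos
        intro j _
        rcases eq_or_ne i j with rfl | hne
        · rw [hdiag i]; norm_num
        · have := hex i j hne
          nlinarith
      linarith
  · rintro ⟨hnn, i0, j0, hne, hpos⟩ d hd
    rw [← Finset.sum_product' (s := Finset.univ) (t := Finset.univ)
      (f := fun i j => g i j * (d i * d j))]
    apply Finset.sum_pos'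
    · intro x _
      rcases eq_or_ne x.1 x.2 with heq | hne'
      · rw [← heq, hdiag x.1]; norm_num
      · exact mul_nonneg (hnn _ _ hne') (mul_pos (hd x.1) (hd x.2)).le
    · exact ⟨(i0, j0), Finset.mem_product.2 ⟨Finset.mem_univ _, Finset.mem_univ _⟩,
        mul_pos hpos (mul_pos (hd i0) (hd j0))⟩

end StmtAux

/-- for `dim S = 2`, `A` is D-stable on `S` iff (a) `a_{ii} ≤ 0` for all `i`
with strict inequality for some `i`, and (b) `M_{ij} ≥ 0` for all `i ≠ j` with strict
inequality for some `i ≠ j`. -/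
theorem stmt19 {n : ℕ} (A : Matrix (Fin n) (Fin n) ℝ) (S : Submodule ℝ (Fin n → ℝ))
    (hA : ∀ v, A.mulVec v ∈ S) (hdim : Module.finrank ℝ S = 2) :
    (∀ D, IsPosDiag D → IsStableOn (A * D) S) ↔
      ((∀ i, A i i ≤ 0) ∧ (∃ i, A i i < 0) ∧
       (∀ i j, i ≠ j → 0 ≤ A i i * A j j - A i j * A j i) ∧
       (∃ i j, i ≠ j ∧ 0 < A i i * A j j - A i j * A j i)) := by
  classical
  have bS : Module.Basis (Fin 2) ℝ S := Module.finBasisOfFinrankEq ℝ S hdim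
  set u : Fin n → ℝ := (bS 0 : Fin n → ℝ) with hu
  set v : Fin n → ℝ := (bS 1 : Fin n → ℝ) with hv
  set p : Fin n → ℝ := fun j => bS.repr ⟨A.mulVec (Pi.single j 1), hA _⟩ 0 with hp
  set q : Fin n → ℝ := fun j => bS.repr ⟨A.mulVec (Pi.single j 1), hA _⟩ 1 with hq
  have hApq : ∀ i j, A i j = p j * u i + q j * v i := by
    intro i j
    have h1 : (⟨A.mulVec (Pi.single j 1), hA _⟩ : S)
        = p j • bS 0 + q j • bS 1 := by
      conv_lhs => rw [← bS.sum_repr ⟨A.mulVec (Pi.single j 1), hA _⟩]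
      rw [Fin.sum_univ_two]
    have h2 := congrArg (fun x : S => (x : Fin n → ℝ) i) h1
    simpa [Matrix.mulVec_single, Pi.single_apply] using h2
  have hBmem : ∀ d : Fin n → ℝ, ∀ w, (A * Matrix.diagonal d).mulVec w ∈ S := by
    intro d w
    rw [← Matrix.mulVec_mulVec]
    exact hA _
  have hchar : ∀ d : Fin n → ℝ,
      ((∀ z : ℂ, (((restrictedMap (A * Matrix.diagonal d) S (hBmem d)).charpoly).map
          (algebraMap ℝ ℂ)).IsRoot z → z.re < 0)
        ↔ ((∑ i, A i i * d i < 0) ∧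
            0 < ∑ i, ∑ j, (A i i * A j j - A i j * A j i) * (d i * d j))) := by
    intro d
    set α : ℝ := ∑ k, p k * d k * u k with hα
    set β : ℝ := ∑ k, p k * d k * v k with hβ
    set γ : ℝ := ∑ k, q k * d k * u k with hγ
    set δ : ℝ := ∑ k, q k * d k * v k with hδ
    have hBvec : ∀ w : Fin n → ℝ, (A * Matrix.diagonal d).mulVec w
        = (∑ k, p k * d k * w k) • u + (∑ k, q k * d k * w k) • v := by
      intro w
      funext i
      rw [← Matrix.mulVec_mulVec]
      have hdw : Matrix.diagonal d *ᵥ w = fun k => d k * w k := by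
        funext k; simp [Matrix.mulVec_diagonal]
      rw [hdw]
      show ∑ k, A i k * (d k * w k) = _
      have : ∀ k, A i k * (d k * w k)
          = p k * d k * w k * u i + q k * d k * w k * v i := by
        intro k; rw [hApq i k]; ring
      rw [Finset.sum_congr rfl (fun k _ => this k), Finset.sum_add_distrib,
        ← Finset.sum_mul, ← Finset.sum_mul]
      simp [Pi.add_apply, Pi.smul_apply, smul_eq_mul]
    set f := restrictedMap (A * Matrix.diagonal d) S (hBmem d) with hf
    have hfapp : ∀ w : S, f w = (∑ k, p k * d k * (w : Fin n → ℝ) k) • bS 0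
        + (∑ k, q k * d k * (w : Fin n → ℝ) k) • bS 1 := by
      intro w
      apply Subtype.ext
      show (A * Matrix.diagonal d).mulVec (w : Fin n → ℝ) = _
      rw [hBvec]
      rfl
    have hM : LinearMap.toMatrix bS bS f = !![α, β; γ, δ] := by
      apply Matrix.ext
      intro i j
      rw [LinearMap.toMatrix_apply, hfapp]
      fin_cases i <;> fin_cases j <;>
        simp [map_add, _root_.map_smul, Module.Basis.repr_self, Finsupp.single_apply, hα, hβ, hγ, hδ, hu, hv]
    have hcp : f.charpoly = X ^ 2 - C (α + δ) * X + C (α * δ - β * γ) := by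
      rw [← LinearMap.charpoly_toMatrix f bS, hM, charpoly_fin2',
        Matrix.trace_fin_two_of, Matrix.det_fin_two_of]
    have ht : ∑ i, A i i * d i = α + δ := by
      rw [hα, hδ, ← Finset.sum_add_distrib]
      apply Finset.sum_congr rfl
      intro i _
      rw [hApq i i]; ring
    have hkey : ∑ i, ∑ j, (A i i * A j j - A i j * A j i) * (d i * d j)
        = 2 * (α * δ - β * γ) := by
      have step1 : ∑ i, ∑ j, (A i i * A j j - A i j * A j i) * (d i * d j)
          = ∑ i, ∑ j, ((A i i * d i) * (A j j * d j)
            - ((p i * d i * u i) * (p j * d j * u j) + ((q i * d i * u i) * (p j * d j * v j)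
            + ((p i * d i * v i) * (q j * d j * u j)
              + (q i * d i * v i) * (q j * d j * v j))))) := by
        apply Finset.sum_congr rfl; intro i _
        apply Finset.sum_congr rfl; intro j _
        rw [hApq i j, hApq j i]; ring
      rw [step1]
      simp only [Finset.sum_sub_distrib, Finset.sum_add_distrib, ← Finset.mul_sum,
        ← Finset.sum_mul]
      rw [ht, hα, hβ, hγ, hδ]
      ring
    rw [hcp, quad_roots_neg' (α + δ) (α * δ - β * γ), ht, hkey]
    constructor
    · rintro ⟨h1, h2⟩; exact ⟨h1, by linarith⟩
    · rintro ⟨h1, h2⟩; exact ⟨h1, by linarith⟩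
  have hg : ∀ i j : Fin n, (fun i j => A i i * A j j - A i j * A j i) i j
      = (fun i j => A i i * A j j - A i j * A j i) j i := by
    intro i j; dsimp only; ring
  have hgd : ∀ i : Fin n, (fun i j => A i i * A j j - A i j * A j i) i i = 0 := by
    intro i; dsimp only; ring
  constructor
  · intro h
    have h1 : ∀ d : Fin n → ℝ, (∀ i, 0 < d i) →
        ((∑ i, A i i * d i < 0) ∧
          0 < ∑ i, ∑ j, (A i i * A j j - A i j * A j i) * (d i * d j)) := by
      intro d hd
      obtain ⟨h', hr⟩ := h (Matrix.diagonal d) ⟨d, hd, rfl⟩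
      exact (hchar d).1 hr
    have hE1 := (E1' (fun i => A i i)).1 (fun d hd => (h1 d hd).1)
    have hE2 := (E2' (fun i j => A i i * A j j - A i j * A j i) hg hgd).1
      (fun d hd => (h1 d hd).2)
    exact ⟨hE1.1, hE1.2, hE2.1, hE2.2⟩
  · rintro ⟨ha1, ha2, hb1, hb2⟩ D ⟨d, hd, rfl⟩
    refine ⟨hBmem d, (hchar d).2 ⟨?_, ?_⟩⟩
    · exact (E1' (fun i => A i i)).2 ⟨ha1, ha2⟩ d hd
    · exact (E2' (fun i j => A i i * A j j - A i j * A j i) hg hgd).2 ⟨hb1, hb2⟩ d hd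
end
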